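/- Let A be a noetherian ring complete with respect to an ideal I, S a profinite set, and let J, J' be closed ideals of C(S,A) such that for every s ∈ S the fiber ideals satisfy J'_s ⊆ J_s. Then J' ⊆ J. In particular, a closed ideal of C(S,A) is determined by its fibers. -/

import Mathlib

/-- Evaluation at a point, as a ring homomorphism `C(S,A) →+* A`. -/
def cEvalHom (S : Type*) [TopologicalSpace S]
    (A : Type*) [CommRing A] [TopologicalSpace A] [IsTopologicalRing A] (s : S) :
    C(S, A) →+* A where
  toFun f := f s
  map_one' := rfl
  map_mul' _ _ := rfl
  map_zero' := rfl
  map_add' _ _ := rfl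

/-!
Given `f ∈ J'` and `n`, the fibre condition gives, for each `s`, some `g ∈ J` with `g s = f s`,
hence `f ≡ g` modulo the open ideal `I ^ n` on a clopen neighbourhood of `s`. Gluing along
characteristic functions of clopen sets and using compactness, one `g ∈ J` satisfies this
everywhere. The real point is that a continuous function with all values in `I ^ n` lies in
`I ^ n · C(S, A)`: with finitely many generators of `I ^ n` (noetherianity), the same gluing
argument improves an approximation by one power of `I` at a time, and the coefficients converge
uniformly by `I`-adic completeness. Closedness of `J` then gives `f ∈ J`.
-/

open Filter Topology

theorem Ideal.exists_sum_eq_of_mem_map_mul_span {A B ι : Type*} [CommRing A] [CommRing B]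
    [Fintype ι] (φ : A →+* B) (K : Ideal A) (v : ι → A) {g : B}
    (hg : g ∈ (K * Ideal.span (Set.range v)).map φ) :
    ∃ c : ι → B, (∀ i, c i ∈ K.map φ) ∧ g = ∑ i, c i * φ (v i) := by
  rw [Ideal.map_mul, Ideal.map_span, ← Set.range_comp, ← smul_eq_mul] at hg
  obtain ⟨a, ha, rfl⟩ := (Submodule.mem_ideal_smul_span_iff_exists_sum _ _ _).1 hg
  exact ⟨a, ha, by simp [Finsupp.sum_fintype]⟩

theorem continuous_of_forall_exists_sub_mem_pow {S A : Type*} [TopologicalSpace S] [CommRing A]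
    [TopologicalSpace A] [IsTopologicalRing A] {I : Ideal A} (hA : IsAdic I) {L : S → A}
    (hL : ∀ k, ∃ g : C(S, A), ∀ x, L x - g x ∈ I ^ k) : Continuous L := by
  refine continuous_iff_continuousAt.2 fun x₀ => ?_
  rw [ContinuousAt, ← tendsto_sub_nhds_zero_iff, hA.hasBasis_nhds_zero.tendsto_right_iff]
  intro k _
  obtain ⟨g, hg⟩ := hL k
  have hg₀ : Tendsto (fun x => g x - g x₀) (𝓝 x₀) (𝓝 0) :=
    tendsto_sub_nhds_zero_iff.2 (g.continuous.tendsto x₀)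
  filter_upwards [hg₀.eventually_mem (((isAdic_iff.1 hA).1 k).mem_nhds (zero_mem _))] with x hx
  have hsplit : L x - L x₀ = (L x - g x) + (g x - g x₀) - (L x₀ - g x₀) := by ring
  rw [hsplit]
  exact sub_mem (add_mem (hg x) hx) (hg x₀)

namespace ContinuousMap

variable {S A : Type*} [TopologicalSpace S] [CommRing A] [TopologicalSpace A] [IsTopologicalRing A]

theorem exists_mem_ideal_eqOn_eqOn_compl (P : Ideal C(S, A)) {U : Set S} (hU : IsClopen U)
    {g₁ g₂ : C(S, A)} (h₁ : g₁ ∈ P) (h₂ : g₂ ∈ P) :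
    ∃ g ∈ P, Set.EqOn g g₁ U ∧ Set.EqOn g g₂ Uᶜ := by
  let e : C(S, A) := LocallyConstant.charFn A hU
  refine ⟨e * g₁ + (1 - e) * g₂, P.add_mem (P.mul_mem_left _ h₁) (P.mul_mem_left _ h₂),
    fun x hx => ?_, fun x hx => ?_⟩
  · simp [e, LocallyConstant.coe_charFn, hx]
  · simp [e, LocallyConstant.coe_charFn, Set.indicator_of_notMem hx]

theorem exists_mem_ideal_forall_sub_mem [CompactSpace S] (P : Ideal C(S, A)) {K : AddSubgroup A}
    (hK : IsOpen (K : Set A)) {f : C(S, A)} (hf : ∀ s, ∃ g ∈ P, f s - g s ∈ K) :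
    ∃ g ∈ P, ∀ x, f x - g x ∈ K := by
  let U : P → Set S := fun g => {x | f x - g.1 x ∈ K}
  have hK' : IsClopen (K : Set A) := ⟨K.isClosed_of_isOpen hK, hK⟩
  have hU : ∀ g, IsClopen (U g) := fun g => hK'.preimage (f.continuous.sub g.1.continuous)
  have hcover : Set.univ ⊆ ⋃ g, U g := fun s _ => by
    obtain ⟨g, hg, hs⟩ := hf s
    exact Set.mem_iUnion.2 ⟨⟨g, hg⟩, hs⟩
  have hdir : Directed (· ⊆ ·) U := by
    intro g₁ g₂
    obtain ⟨g, hg, h₁, h₂⟩ := exists_mem_ideal_eqOn_eqOn_compl P (hU g₁) g₁.2 g₂.2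
    refine ⟨⟨g, hg⟩, fun x hx => ?_, fun x hx => ?_⟩
    · simpa [U, h₁ hx] using hx
    · by_cases hx₁ : x ∈ U g₁
      · simpa [U, h₁ hx₁] using hx₁
      · simpa [U, h₂ hx₁] using hx
  obtain ⟨g, hg⟩ := isCompact_univ.elim_directed_cover U (fun g => (hU g).isOpen) hcover hdir
  exact ⟨g, g.2, fun x => hg (Set.mem_univ x)⟩

theorem apply_mem_of_mem_map_algebraMap {K : Ideal A} {g : C(S, A)}
    (hg : g ∈ K.map (algebraMap A C(S, A))) (x : S) : g x ∈ K := by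
  have hle : K.map (algebraMap A C(S, A)) ≤ K.comap (cEvalHom S A x) :=
    Ideal.map_le_iff_le_comap.2 fun a ha => by
      change algebraMap A C(S, A) a x ∈ K
      simpa [algebraMap_apply] using ha
  exact hle hg

section Adic

variable {I : Ideal A}

theorem exists_forall_sub_mem_pow_of_forall_succ_sub_mem_pow [IsPrecomplete I A] (hA : IsAdic I)
    (F : ℕ → C(S, A)) (hF : ∀ k x, F (k + 1) x - F k x ∈ I ^ k) :
    ∃ G : C(S, A), ∀ k x, G x - F k x ∈ I ^ k := by
  have hcauchy : ∀ {k l}, k ≤ l → ∀ x, F l x - F k x ∈ I ^ k := by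
    intro k l hkl x
    induction l, hkl using Nat.le_induction with
    | base => simp
    | succ l hkl ih =>
      rw [← sub_add_sub_cancel _ (F l x)]
      exact add_mem (Ideal.pow_le_pow_right hkl (hF l x)) ih
  have hlim : ∀ x, ∃ L : A, ∀ k, L - F k x ∈ I ^ k := fun x => by
    obtain ⟨L, hL⟩ := IsPrecomplete.prec ‹_› (f := fun k => F k x) fun hkl => by
      simpa [SModEq.sub_mem, sub_mem_comm_iff] using hcauchy hkl x
    exact ⟨L, fun k => by simpa [SModEq.sub_mem, sub_mem_comm_iff] using hL k⟩
  choose L hL using hlim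
  exact ⟨⟨L, continuous_of_forall_exists_sub_mem_pow hA fun k => ⟨F k, fun x => hL x k⟩⟩,
    fun k x => hL x k⟩

theorem exists_sum_sub_mem_pow_succ [CompactSpace S] (hA : IsAdic I) {ι : Type*} [Fintype ι]
    {n : ℕ} {v : ι → A} (hv : Ideal.span (Set.range v) = I ^ n) {k : ℕ} {r : C(S, A)}
    (hr : ∀ x, r x ∈ I ^ (k + n)) :
    ∃ d : ι → C(S, A), (∀ i x, d i x ∈ I ^ k) ∧
      ∀ x, r x - (∑ i, d i * algebraMap A C(S, A) (v i)) x ∈ I ^ (k + 1 + n) := by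
  obtain ⟨g, hg, hrg⟩ :=
    exists_mem_ideal_forall_sub_mem ((I ^ (k + n)).map (algebraMap A C(S, A)))
      (K := (I ^ (k + 1 + n)).toAddSubgroup) (f := r) ((isAdic_iff.1 hA).1 _)
      fun s => ⟨algebraMap A C(S, A) (r s), Ideal.mem_map_of_mem _ (hr s), by simp⟩
  rw [pow_add, ← hv] at hg
  obtain ⟨d, hd, rfl⟩ := Ideal.exists_sum_eq_of_mem_map_mul_span _ _ _ hg
  exact ⟨d, fun i => apply_mem_of_mem_map_algebraMap (hd i), hrg⟩

theorem mem_map_algebraMap_pow_iff [CompactSpace S] [IsNoetherianRing A] [IsAdicComplete I A]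
    (hA : IsAdic I) (n : ℕ) {h : C(S, A)} :
    h ∈ (I ^ n).map (algebraMap A C(S, A)) ↔ ∀ x, h x ∈ I ^ n := by
  refine ⟨apply_mem_of_mem_map_algebraMap, fun hh => ?_⟩
  obtain ⟨m, v, hv⟩ :=
    Submodule.fg_iff_exists_fin_generating_family.1 (IsNoetherian.noetherian (I ^ n))
  let Φ : (Fin m → C(S, A)) → C(S, A) := fun c => ∑ i, c i * algebraMap A C(S, A) (v i)
  have step : ∀ k (c : Fin m → C(S, A)), (∀ x, h x - Φ c x ∈ I ^ (k + n)) →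
      ∃ d : Fin m → C(S, A), (∀ i x, d i x ∈ I ^ k) ∧
        ∀ x, h x - Φ (c + d) x ∈ I ^ (k + 1 + n) := by
    intro k c hc
    obtain ⟨d, hd, hrd⟩ := exists_sum_sub_mem_pow_succ hA hv (r := h - Φ c) hc
    refine ⟨d, hd, fun x => ?_⟩
    simpa [Φ, add_mul, Finset.sum_add_distrib, sub_sub] using hrd x
  choose! d hd using step
  let E : ℕ → Fin m → C(S, A) := fun k => Nat.rec 0 (fun k c => c + d k c) k
  have hE : ∀ k x, h x - Φ (E k) x ∈ I ^ (k + n) := by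
    intro k
    induction k with
    | zero => simpa [E, Φ] using hh
    | succ k ih => exact (hd k (E k) ih).2
  have hlim : ∀ i, ∃ G : C(S, A), ∀ k x, G x - E k i x ∈ I ^ k := fun i =>
    exists_forall_sub_mem_pow_of_forall_succ_sub_mem_pow hA (fun k => E k i)
      fun k x => by simpa [E] using (hd k (E k) (hE k)).1 i x
  choose G hG using hlim
  have hh_eq : h = Φ G := by
    ext x
    rw [← sub_eq_zero]
    refine IsHausdorff.haus (I := I) inferInstance _ fun k => ?_
    have hsplit : h x - Φ G x = (h x - Φ (E k) x) - ∑ i, (G i x - E k i x) * v i := by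
      simp [Φ, sub_mul, Finset.sum_sub_distrib]
    rw [SModEq.zero, smul_eq_mul, Ideal.mul_top, hsplit]
    exact sub_mem (Ideal.pow_le_pow_right (Nat.le_add_right k n) (hE k x))
      (Ideal.sum_mem _ fun i _ => Ideal.mul_mem_right _ _ (hG i k x))
  rw [hh_eq]
  exact Ideal.sum_mem _ fun i _ =>
    Ideal.mul_mem_left _ _ (Ideal.mem_map_of_mem _ (hv ▸ Submodule.subset_span ⟨i, rfl⟩))

end Adic

end ContinuousMap

theorem closed_ideal_determined_by_fibers_general
    (A : Type*) [CommRing A] [IsNoetherianRing A] [TopologicalSpace A] [IsTopologicalRing A]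
    (I : Ideal A) (hA : IsAdic I) [IsAdicComplete I A]
    (S : Type*) [TopologicalSpace S] [CompactSpace S]
    (J J' : Ideal C(S, A))
    (hJclosed : ∀ g : C(S, A),
      (∀ n : ℕ, g ∈ J ⊔ Ideal.map (algebraMap A C(S, A)) (I ^ n)) → g ∈ J)
    (hfib : ∀ s : S, Ideal.map (cEvalHom S A s) J' ≤ Ideal.map (cEvalHom S A s) J) :
    J' ≤ J := by
  intro f hf
  refine hJclosed f fun n => ?_
  have hpoint : ∀ s, ∃ g ∈ J, f s - g s ∈ (I ^ n).toAddSubgroup := fun s => by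
    obtain ⟨g, hg, hgs⟩ := (Ideal.mem_map_iff_of_surjective _ fun a => ⟨.const S a, rfl⟩).1
      (hfib s (Ideal.mem_map_of_mem _ hf))
    exact ⟨g, hg, by simp [show g s = f s from hgs]⟩
  obtain ⟨g, hg, hfg⟩ :=
    ContinuousMap.exists_mem_ideal_forall_sub_mem J ((isAdic_iff.1 hA).1 n) hpoint
  have hfg' : f - g ∈ (I ^ n).map (algebraMap A C(S, A)) :=
    (ContinuousMap.mem_map_algebraMap_pow_iff hA n).2 hfg
  simpa using Submodule.add_mem_sup hg hfg'

/-- Let `A` be a noetherian ring complete with respect to an ideal `I` (with the `I`-adic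
topology), `S` a profinite set, and let `J, J'` be closed ideals of `C(S,A)` (closedness
expressed by `J = ⋂ₙ (J + I^n·C(S,A))`) such that for every `s ∈ S` the fiber ideals
satisfy `J'_s ⊆ J_s`.  Then `J' ⊆ J`: a closed ideal of `C(S,A)` is determined by its
fibers. -/
theorem closed_ideal_determined_by_fibers
    (A : Type*) [CommRing A] [IsNoetherianRing A] [TopologicalSpace A] [IsTopologicalRing A]
    (I : Ideal A) (hA : IsAdic I) [IsAdicComplete I A]
    (S : Type*) [TopologicalSpace S] [CompactSpace S] [T2Space S] [TotallyDisconnectedSpace S]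
    (J J' : Ideal C(S, A))
    (hJclosed : ∀ g : C(S, A),
      (∀ n : ℕ, g ∈ J ⊔ Ideal.map (algebraMap A C(S, A)) (I ^ n)) → g ∈ J)
    (hJ'closed : ∀ g : C(S, A),
      (∀ n : ℕ, g ∈ J' ⊔ Ideal.map (algebraMap A C(S, A)) (I ^ n)) → g ∈ J')
    (hfib : ∀ s : S, Ideal.map (cEvalHom S A s) J' ≤ Ideal.map (cEvalHom S A s) J) :
    J' ≤ J :=
  closed_ideal_determined_by_fibers_general A I hA S J J' hJclosed hfib
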